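/- The function y ↦ y·ζ(y)/φ(y), where φ(y) = y - 1 - log y and ζ(y) = (y-1)^2/y, extended by the value 2 at y = 1, is nondecreasing on (0,∞), tends to 0 as y → 0+, and tends to +∞ as y → +∞. -/

import Mathlib

/-!
Away from `y = 1` the ratio `r = (y - 1)² / φ` has derivative `(y - 1) (2φ - ζ) / φ²`, and
`2φ - ζ` vanishes at `1` with derivative `(1 - 1/y)² ≥ 0`, so it has the sign of `y - 1`:
hence `r` is nondecreasing on `(0, 1)` and on `(1, ∞)`. Similarly `(y - 1)² - 2φ` vanishes
at `1` with derivative `2ζ ≥ 0`, which puts `r` below `2` on `(0, 1)` and above `2` on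
`(1, ∞)`, so the two pieces glue through the value `2` at `1`. For the limits, `φ → ∞` as
`y → 0⁺`, and `0 < φ ≤ y - 1` gives `r ≥ y - 1` for `y > 1`.
-/

open Real Filter Topology Set

noncomputable def yZetaPhiRatio (y : ℝ) : ℝ :=
  if y = 1 then 2 else (y - 1) ^ 2 / (y - 1 - Real.log y)

lemma monotoneOn_of_hasDerivAt_nonneg {D : Set ℝ} (hD : Convex ℝ D) {f f' : ℝ → ℝ}
    (hf : ∀ x ∈ D, HasDerivAt f (f' x) x) (hf' : ∀ x ∈ D, 0 ≤ f' x) : MonotoneOn f D :=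
  monotoneOn_of_hasDerivWithinAt_nonneg hD (fun x hx ↦ (hf x hx).continuousAt.continuousWithinAt)
    (fun x hx ↦ (hf x (interior_subset hx)).hasDerivWithinAt)
    (fun x hx ↦ hf' x (interior_subset hx))

lemma monotoneOn_of_inter_Iio_of_inter_Ioi {α β : Type*} [LinearOrder α] [Preorder β]
    {f : α → β} {s : Set α} {c : α} (hlt : MonotoneOn f (s ∩ Iio c))
    (hgt : MonotoneOn f (s ∩ Ioi c)) (hle : ∀ x ∈ s, x ≤ c → f x ≤ f c)
    (hge : ∀ x ∈ s, c ≤ x → f c ≤ f x) : MonotoneOn f s := by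
  intro x hx y hy hxy
  rcases lt_or_ge y c with hyc | hcy
  · exact hlt ⟨hx, hxy.trans_lt hyc⟩ ⟨hy, hyc⟩ hxy
  rcases lt_or_ge c x with hcx | hxc
  · exact hgt ⟨hx, hcx⟩ ⟨hy, hcx.trans_le hxy⟩ hxy
  · exact (hle x hx hxc).trans (hge y hy hcy)

noncomputable def phi (y : ℝ) : ℝ := y - 1 - Real.log y

noncomputable def zeta (y : ℝ) : ℝ := (y - 1) ^ 2 / y

lemma phi_pos {y : ℝ} (hy : 0 < y) (hy1 : y ≠ 1) : 0 < phi y := by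
  have := Real.log_lt_sub_one_of_pos hy hy1
  unfold phi
  linarith

lemma phi_le_sub_one {y : ℝ} (hy : 1 ≤ y) : phi y ≤ y - 1 := by
  have := Real.log_nonneg hy
  unfold phi
  linarith

lemma zeta_nonneg {y : ℝ} (hy : 0 < y) : 0 ≤ zeta y := by
  unfold zeta
  positivity

lemma hasDerivAt_phi {y : ℝ} (hy : y ≠ 0) : HasDerivAt phi (1 - y⁻¹) y :=
  ((hasDerivAt_id y).sub_const 1).sub (Real.hasDerivAt_log hy)

lemma hasDerivAt_sq_sub_one (y : ℝ) :
    HasDerivAt (fun y : ℝ ↦ (y - 1) ^ 2) (2 * (y - 1)) y := by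
  simpa using ((hasDerivAt_id' y).sub_const 1).fun_pow 2

lemma hasDerivAt_zeta {y : ℝ} (hy : y ≠ 0) : HasDerivAt zeta (1 - (y ^ 2)⁻¹) y := by
  refine ((hasDerivAt_sq_sub_one y).div (hasDerivAt_id' y) hy).congr_deriv ?_
  field_simp
  ring

lemma monotoneOn_two_mul_phi_sub_zeta :
    MonotoneOn (fun y ↦ 2 * phi y - zeta y) (Ioi 0) := by
  refine monotoneOn_of_hasDerivAt_nonneg (convex_Ioi 0)
    (fun y hy ↦ (((hasDerivAt_phi (ne_of_gt hy)).const_mul 2).sub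
      (hasDerivAt_zeta (ne_of_gt hy))).congr_deriv ?_) (fun y _ ↦ sq_nonneg (1 - y⁻¹))
  field_simp
  ring

lemma monotoneOn_sq_sub_one_sub_two_mul_phi :
    MonotoneOn (fun y ↦ (y - 1) ^ 2 - 2 * phi y) (Ioi 0) := by
  refine monotoneOn_of_hasDerivAt_nonneg (convex_Ioi 0)
    (fun y hy ↦ ((hasDerivAt_sq_sub_one y).sub
      ((hasDerivAt_phi (ne_of_gt hy)).const_mul 2)).congr_deriv ?_)
    (fun y hy ↦ mul_nonneg zero_le_two (zeta_nonneg hy))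
  have hy0 : y ≠ 0 := ne_of_gt hy
  unfold zeta
  field_simp

lemma phi_one : phi 1 = 0 := by simp [phi]

lemma zeta_one : zeta 1 = 0 := by simp [zeta]

lemma yZetaPhiRatio_one : yZetaPhiRatio 1 = 2 := if_pos rfl

lemma yZetaPhiRatio_of_ne_one {y : ℝ} (hy : y ≠ 1) : yZetaPhiRatio y = (y - 1) ^ 2 / phi y :=
  if_neg hy

lemma hasDerivAt_yZetaPhiRatio {y : ℝ} (hy : 0 < y) (hy1 : y ≠ 1) :
    HasDerivAt yZetaPhiRatio ((y - 1) * (2 * phi y - zeta y) / phi y ^ 2) y := by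
  have hφ := phi_pos hy hy1
  refine (((hasDerivAt_sq_sub_one y).div (hasDerivAt_phi hy.ne') hφ.ne').congr_deriv ?_)
    |>.congr_of_eventuallyEq ?_
  · unfold zeta
    field_simp
  · filter_upwards [eventually_ne_nhds hy1] with x hx using yZetaPhiRatio_of_ne_one hx

lemma sub_one_mul_two_mul_phi_sub_zeta_nonneg {y : ℝ} (hy : 0 < y) :
    0 ≤ (y - 1) * (2 * phi y - zeta y) := by
  have hg := monotoneOn_two_mul_phi_sub_zeta (a := y) (b := 1) hy (mem_Ioi.2 one_pos)
  have hg' := monotoneOn_two_mul_phi_sub_zeta (a := 1) (b := y) (mem_Ioi.2 one_pos) hy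
  simp only [phi_one, zeta_one, mul_zero, sub_self] at hg hg'
  rcases le_total y 1 with hy1 | hy1
  · exact mul_nonneg_of_nonpos_of_nonpos (by linarith) (by simpa using hg hy1)
  · exact mul_nonneg (by linarith) (by simpa using hg' hy1)

lemma yZetaPhiRatio_le_two {y : ℝ} (hy : 0 < y) (hy1 : y ≤ 1) : yZetaPhiRatio y ≤ 2 := by
  rcases hy1.eq_or_lt with rfl | hy1
  · exact yZetaPhiRatio_one.le
  rw [yZetaPhiRatio_of_ne_one hy1.ne, div_le_iff₀ (phi_pos hy hy1.ne)]
  have := monotoneOn_sq_sub_one_sub_two_mul_phi hy (mem_Ioi.2 one_pos) hy1.le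
  simp only [phi_one] at this
  linarith

lemma two_le_yZetaPhiRatio {y : ℝ} (hy1 : 1 ≤ y) : 2 ≤ yZetaPhiRatio y := by
  rcases hy1.eq_or_lt with rfl | hy1
  · exact yZetaPhiRatio_one.ge
  rw [yZetaPhiRatio_of_ne_one hy1.ne', le_div_iff₀ (phi_pos (one_pos.trans hy1) hy1.ne')]
  have := monotoneOn_sq_sub_one_sub_two_mul_phi (mem_Ioi.2 one_pos) (one_pos.trans hy1) hy1.le
  simp only [phi_one] at this
  linarith

lemma monotoneOn_yZetaPhiRatio_of_convex {D : Set ℝ} (hD : Convex ℝ D)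
    (hD1 : ∀ y ∈ D, 0 < y ∧ y ≠ 1) : MonotoneOn yZetaPhiRatio D :=
  monotoneOn_of_hasDerivAt_nonneg hD
    (fun y hy ↦ hasDerivAt_yZetaPhiRatio (hD1 y hy).1 (hD1 y hy).2)
    (fun y hy ↦ div_nonneg (sub_one_mul_two_mul_phi_sub_zeta_nonneg (hD1 y hy).1) (sq_nonneg _))

lemma monotoneOn_yZetaPhiRatio : MonotoneOn yZetaPhiRatio (Ioi 0) :=
  monotoneOn_of_inter_Iio_of_inter_Ioi (c := 1)
    (monotoneOn_yZetaPhiRatio_of_convex ((convex_Ioi 0).inter (convex_Iio 1))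
      fun _ hy ↦ ⟨hy.1, hy.2.ne⟩)
    (monotoneOn_yZetaPhiRatio_of_convex ((convex_Ioi 0).inter (convex_Ioi 1))
      fun _ hy ↦ ⟨hy.1, hy.2.ne'⟩)
    (fun _ hy hy1 ↦ yZetaPhiRatio_one ▸ yZetaPhiRatio_le_two hy hy1)
    (fun _ _ hy1 ↦ yZetaPhiRatio_one ▸ two_le_yZetaPhiRatio hy1)

lemma tendsto_phi_nhdsGT_zero : Tendsto phi (𝓝[>] 0) atTop := by
  have hlin : Tendsto (fun y : ℝ ↦ y - 1) (𝓝[>] 0) (𝓝 (-1)) :=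
    tendsto_nhdsWithin_of_tendsto_nhds (by simpa using (continuous_sub_right (1 : ℝ)).tendsto 0)
  exact (hlin.add_atTop (tendsto_neg_atBot_atTop.comp tendsto_log_nhdsGT_zero)).congr
    fun y ↦ by simp [phi, sub_eq_add_neg]

lemma tendsto_yZetaPhiRatio_nhdsGT_zero : Tendsto yZetaPhiRatio (𝓝[>] 0) (𝓝 0) := by
  have hsq : Tendsto (fun y : ℝ ↦ (y - 1) ^ 2) (𝓝[>] 0) (𝓝 1) :=
    tendsto_nhdsWithin_of_tendsto_nhds <| by
      simpa using ((continuous_sub_right (1 : ℝ)).tendsto 0).pow 2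
  refine (hsq.div_atTop tendsto_phi_nhdsGT_zero).congr' ?_
  filter_upwards [Ioo_mem_nhdsGT one_pos] with y hy using (yZetaPhiRatio_of_ne_one hy.2.ne).symm

lemma sub_one_le_yZetaPhiRatio {y : ℝ} (hy : 1 < y) : y - 1 ≤ yZetaPhiRatio y := by
  rw [yZetaPhiRatio_of_ne_one hy.ne', le_div_iff₀ (phi_pos (one_pos.trans hy) hy.ne')]
  nlinarith [phi_le_sub_one hy.le]

lemma tendsto_yZetaPhiRatio_atTop : Tendsto yZetaPhiRatio atTop atTop :=
  tendsto_atTop_mono' _ ((eventually_gt_atTop 1).mono fun _ ↦ sub_one_le_yZetaPhiRatio)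
    (tendsto_atTop_add_const_right _ (-1) tendsto_id)

theorem yZetaPhiRatio_monotone_and_limits :
    MonotoneOn yZetaPhiRatio (Set.Ioi (0 : ℝ)) ∧
    Filter.Tendsto yZetaPhiRatio (nhdsWithin 0 (Set.Ioi 0)) (nhds 0) ∧
    Filter.Tendsto yZetaPhiRatio Filter.atTop Filter.atTop :=
  ⟨monotoneOn_yZetaPhiRatio, tendsto_yZetaPhiRatio_nhdsGT_zero, tendsto_yZetaPhiRatio_atTop⟩
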